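/- arXiv:2303.07097 — 5 statements merged into one kernel-verified Lean document; each statement's English description precedes it below -/
import Mathlib

section
/- Any two elements of the hierarchy Γ_k(X) have a least upper bound: for all elements (s,C) and (t,D) of Γ_k(X) there exists an element (u,E) of Γ_k(X) such that (s,C) ≤ (u,E) and (t,D) ≤ (u,E), and such that (u,E) ≤ (v,F) for every element (v,F) with (s,C) ≤ (v,F) and (t,D) ≤ (v,F). -/
variable {Z : Type*} [MetricSpace Z]

/-- Vertex set `V_{s,k}(X)` of the degree-Rips complex: points of `X` having at
least `k` other points of `X` within distance `s`. -/
def drVertex (X : Set Z) (k : ℕ) (s : ℝ) : Set Z :=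
  {x ∈ X | k ≤ {y ∈ X | y ≠ x ∧ dist x y ≤ s}.ncard}

/-- The generating relation for components: two vertices at distance at most `s`. -/
def drStep (X : Set Z) (k : ℕ) (s : ℝ) (x y : Z) : Prop :=
  x ∈ drVertex X k s ∧ y ∈ drVertex X k s ∧ dist x y ≤ s

/-- `C` is a degree-Rips component (an element of `π₀ L_{s,k}(X)`): the class of
some vertex `x` under the equivalence relation generated by `drStep`. -/
def drComp (X : Set Z) (k : ℕ) (s : ℝ) (C : Set Z) : Prop :=
  ∃ x ∈ drVertex X k s, C = {y | Relation.ReflTransGen (drStep X k s) x y}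

/-- `(t, C)` is a layer point of `Γ_k(X)`: it is an element of the hierarchy, and
every element `(s, D) ≤ (t, C)` with `s < t` has `D` a proper subset of `C`. -/
def IsLayer (X : Set Z) (k : ℕ) (t : ℝ) (C : Set Z) : Prop :=
  0 ≤ t ∧ drComp X k t C ∧
    ∀ s D, 0 ≤ s → drComp X k s D → s < t → D ⊆ C → D ⊂ C

/-- `(t, C)` is a branch point of `Γ_k(X)`. -/
def IsBranch (X : Set Z) (k : ℕ) (t : ℝ) (C : Set Z) : Prop :=
  0 ≤ t ∧ drComp X k t C ∧
    ((∀ s D, 0 ≤ s → drComp X k s D → s < t → ¬D ⊆ C) ∨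
      ∃ s₀, s₀ < t ∧ ∀ s, s₀ ≤ s → s < t →
        ∃ D₁ D₂, drComp X k s D₁ ∧ drComp X k s D₂ ∧ D₁ ≠ D₂ ∧ D₁ ⊆ C ∧ D₂ ⊆ C)

/-- `(t, D)` is the maximal layer point below the element `(u, C)` of `Γ_k(X)`:
it is a layer point, `(t, D) ≤ (u, C)`, and every layer point below `(u, C)`
is below `(t, D)`. -/
def IsMaxLayerBelow (X : Set Z) (k : ℕ) (u : ℝ) (C : Set Z) (t : ℝ) (D : Set Z) : Prop :=
  IsLayer X k t D ∧ t ≤ u ∧ D ⊆ C ∧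
    ∀ t' D', IsLayer X k t' D' → t' ≤ u → D' ⊆ C → t' ≤ t ∧ D' ⊆ D

/-- `t` is a layer parameter of `X`. -/
def IsLayerParam (X : Set Z) (k : ℕ) (t : ℝ) : Prop :=
  ∃ C, IsLayer X k t C

/-- A stability map `θ : Y → X` (encoded as a map `Z → Z` carrying `Y` into `X`). -/
def IsStabilityMap (X Y : Set Z) (k : ℕ) (r : ℝ) (θ : Z → Z) : Prop :=
  (∀ y ∈ Y, θ y ∈ X) ∧
    ∀ s : ℝ, 0 ≤ s →
      (∀ y₁ y₂, y₁ ∈ drVertex Y k s → y₂ ∈ drVertex Y k s → dist y₁ y₂ ≤ s →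
          θ y₁ ∈ drVertex X k (s + 2 * r) ∧ θ y₂ ∈ drVertex X k (s + 2 * r) ∧
          dist (θ y₁) (θ y₂) ≤ s + 2 * r) ∧
      (∀ x ∈ drVertex X k s, ∃ C, drComp X k (s + 2 * r) C ∧ x ∈ C ∧ θ x ∈ C) ∧
      (∀ y ∈ drVertex Y k s, ∃ D, drComp Y k (s + 2 * r) D ∧ y ∈ D ∧ θ y ∈ D)

/-- Vertices of the degree-Rips complex at scale infinity: points with at least
`k` other points. -/
def drVertexInf (W : Set Z) (k : ℕ) : Set Z :=
  {w ∈ W | k ≤ {w' ∈ W | w' ≠ w}.ncard}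

/-- Phase change numbers: distances between distinct vertices at scale infinity. -/
def IsPhaseChange (W : Set Z) (k : ℕ) (t : ℝ) : Prop :=
  ∃ w₁ ∈ drVertexInf W k, ∃ w₂ ∈ drVertexInf W k, w₁ ≠ w₂ ∧ t = dist w₁ w₂

/-! Pick vertices `x ∈ C` and `y ∈ D`. The join of `(s, C)` and `(t, D)` is the component of `x`
at the least scale `u ≥ max s t` at which `x` and `y` are connected. This least scale exists
because the graph at scale `v` only changes when `v` crosses one of the finitely many distances
in `X`. Any upper bound `(v, F)` has `x, y ∈ F`, so `v` is such a scale, giving `u ≤ v`, and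
then the component of `x` at scale `u` lies inside `F`. -/

theorem exists_isLeast_of_forall_exists_mem_le {α : Type*} [LinearOrder α] {P : α → Prop}
    {T : Set α} (hT : T.Finite) (hP : ∃ v, P v) (hred : ∀ v, P v → ∃ w ∈ T, w ≤ v ∧ P w) :
    ∃ u, IsLeast {v | P v} u := by
  obtain ⟨v₀, hv₀⟩ := hP
  obtain ⟨w₀, hw₀T, -, hw₀⟩ := hred v₀ hv₀
  obtain ⟨u, ⟨-, hu⟩, hmin⟩ :=
    Set.exists_min_image {w ∈ T | P w} id (hT.subset fun _ h => h.1) ⟨w₀, hw₀T, hw₀⟩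
  refine ⟨u, hu, fun v hv => ?_⟩
  obtain ⟨w, hwT, hwv, hw⟩ := hred v hv
  exact (hmin w ⟨hwT, hw⟩).trans hwv

section DegreeRips

variable {X : Set Z} {k : ℕ} {s t v w : ℝ} {x y : Z}

/-- The component of `x` in `L_{s,k}(X)`; it is `{x}` when `x ∉ drVertex X k s`. -/
def drClass (X : Set Z) (k : ℕ) (s : ℝ) (x : Z) : Set Z :=
  {y | Relation.ReflTransGen (drStep X k s) x y}

lemma drVertex_mono (hX : X.Finite) (h : s ≤ t) : drVertex X k s ⊆ drVertex X k t := by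
  rintro x ⟨hxX, hk⟩
  refine ⟨hxX, hk.trans (Set.ncard_le_ncard ?_ (hX.subset fun y hy => hy.1))⟩
  rintro y ⟨hy, hne, hd⟩
  exact ⟨hy, hne, hd.trans h⟩

lemma drStep_mono (hX : X.Finite) (h : s ≤ t) : drStep X k s ≤ drStep X k t :=
  fun _ _ ⟨hx, hy, hd⟩ => ⟨drVertex_mono hX h hx, drVertex_mono hX h hy, hd.trans h⟩

instance : Std.Symm (drStep X k s) where
  symm _ _ := fun ⟨hx, hy, hd⟩ => ⟨hy, hx, by rwa [dist_comm]⟩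

lemma drStep_le_of_no_dist_between (hwv : w ≤ v)
    (hgap : ∀ a ∈ X, ∀ b ∈ X, dist a b ≤ v → dist a b ≤ w) :
    drStep X k v ≤ drStep X k w := by
  have hV : drVertex X k v ⊆ drVertex X k w := by
    rintro x ⟨hxX, hk⟩
    refine ⟨hxX, hk.trans_eq (congrArg Set.ncard ?_)⟩
    ext y
    exact ⟨fun ⟨hy, hne, hd⟩ => ⟨hy, hne, hgap x hxX y hy hd⟩,
      fun ⟨hy, hne, hd⟩ => ⟨hy, hne, hd.trans hwv⟩⟩
  exact fun x y ⟨hx, hy, hd⟩ => ⟨hV hx, hV hy, hgap x hx.1 y hy.1 hd⟩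

theorem exists_isLeast_scale (hX : X.Finite) (m : ℝ) {Q : (Z → Z → Prop) → Prop}
    (hQ : Monotone Q) (h : ∃ v, m ≤ v ∧ Q (drStep X k v)) :
    ∃ u, IsLeast {v | m ≤ v ∧ Q (drStep X k v)} u := by
  set T : Set ℝ := insert m ((fun p : Z × Z => dist p.1 p.2) '' X ×ˢ X)
  have hT : T.Finite := ((hX.prod hX).image _).insert m
  refine exists_isLeast_of_forall_exists_mem_le hT h fun v ⟨hmv, hv⟩ => ?_
  obtain ⟨w, ⟨hwT, hwv⟩, hmax⟩ :=
    Set.exists_max_image (T ∩ Set.Iic v) id (hT.subset Set.inter_subset_left)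
      ⟨m, Set.mem_insert m _, hmv⟩
  have hgap : ∀ a ∈ X, ∀ b ∈ X, dist a b ≤ v → dist a b ≤ w := fun a ha b hb hab =>
    hmax _ ⟨Set.mem_insert_of_mem m ⟨(a, b), ⟨ha, hb⟩, rfl⟩, hab⟩
  exact ⟨w, hwT, hwv, hmax m ⟨Set.mem_insert m _, hmv⟩,
    hQ (drStep_le_of_no_dist_between hwv hgap) hv⟩

lemma mem_drClass_self : x ∈ drClass X k s x :=
  Relation.ReflTransGen.refl

lemma drClass_mono (hX : X.Finite) (h : s ≤ t) : drClass X k s x ⊆ drClass X k t x :=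
  fun _ hy => Relation.ReflTransGen.mono (drStep_mono hX h) _ _ hy

lemma drClass_subset_of_mem (hy : y ∈ drClass X k s x) : drClass X k s y ⊆ drClass X k s x :=
  fun _ hz => Relation.ReflTransGen.trans hy hz

lemma drClass_eq_of_mem (hy : y ∈ drClass X k s x) : drClass X k s y = drClass X k s x := by
  refine (drClass_subset_of_mem hy).antisymm (drClass_subset_of_mem ?_)
  exact symm hy

lemma drComp.eq_drClass_of_mem {C : Set Z} (hC : drComp X k s C) (hx : x ∈ C) :
    C = drClass X k s x := by
  obtain ⟨x₀, -, rfl⟩ := hC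
  exact (drClass_eq_of_mem hx).symm

end DegreeRips

theorem gamma_lub_exists_general (X : Set Z) (hXfin : X.Finite) (k : ℕ)
    (s t : ℝ) (C D : Set Z)
    (hs : 0 ≤ s) (hC : drComp X k s C) (hD : drComp X k t D) :
    ∃ u E, 0 ≤ u ∧ drComp X k u E ∧
      (s ≤ u ∧ C ⊆ E) ∧ (t ≤ u ∧ D ⊆ E) ∧
      ∀ v F, 0 ≤ v → drComp X k v F →
        (s ≤ v ∧ C ⊆ F) → (t ≤ v ∧ D ⊆ F) → u ≤ v ∧ E ⊆ F := by
  obtain ⟨x, hxV, rfl⟩ := hC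
  obtain ⟨y, hyV, rfl⟩ := hD
  have hconn : ∃ v, max s t ≤ v ∧ Relation.ReflTransGen (drStep X k v) x y := by
    refine ⟨max (max s t) (dist x y), le_max_left _ _, .single ⟨?_, ?_, le_max_right _ _⟩⟩
    · exact drVertex_mono hXfin ((le_max_left s t).trans (le_max_left _ _)) hxV
    · exact drVertex_mono hXfin ((le_max_right s t).trans (le_max_left _ _)) hyV
  obtain ⟨u, ⟨hstu, hxy⟩, hleast⟩ := exists_isLeast_scale hXfin (max s t)
    (Q := fun r => Relation.ReflTransGen r x y) (fun _ _ h => Relation.ReflTransGen.mono h _ _)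
    hconn
  obtain ⟨hsu, htu⟩ := max_le_iff.1 hstu
  refine ⟨u, drClass X k u x, hs.trans hsu, ⟨x, drVertex_mono hXfin hsu hxV, rfl⟩,
    ⟨hsu, drClass_mono hXfin hsu⟩,
    ⟨htu, (drClass_mono hXfin htu).trans (drClass_subset_of_mem hxy)⟩, ?_⟩
  rintro v F - hF ⟨hsv, hCF⟩ ⟨htv, hDF⟩
  have hFx : F = drClass X k v x := hF.eq_drClass_of_mem (hCF mem_drClass_self)
  subst hFx
  have huv : u ≤ v := hleast ⟨max_le hsv htv, hDF mem_drClass_self⟩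
  exact ⟨huv, drClass_mono hXfin huv⟩

/-- any two elements of `Γ_k(X)` have a least upper bound. -/
theorem gamma_lub_exists (X : Set Z) (hXfin : X.Finite) (k : ℕ)
    (s t : ℝ) (C D : Set Z)
    (hs : 0 ≤ s) (hC : drComp X k s C) (ht : 0 ≤ t) (hD : drComp X k t D) :
    ∃ u E, 0 ≤ u ∧ drComp X k u E ∧
      (s ≤ u ∧ C ⊆ E) ∧ (t ≤ u ∧ D ⊆ E) ∧
      ∀ v F, 0 ≤ v → drComp X k v F →
        (s ≤ v ∧ C ⊆ F) → (t ≤ v ∧ D ⊆ F) → u ≤ v ∧ E ⊆ F :=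
  gamma_lub_exists_general X hXfin k s t C D hs hC hD
end

section
/- Every layer point of the Vietoris–Rips hierarchy Γ₀(X) is a branch point of Γ₀(X); hence for k = 0 the branch points and the layer points coincide. -/
variable {Z : Type*} [MetricSpace Z]

/-!
At `k = 0` every point of `X` is a vertex at every scale, so the `s`-component of a point grows
with `s`. If `(t, C)` is a layer point with `t > 0` and `x ∈ C`, then for each `s < t` the
`s`-component of `x` lies below `C`, hence is a proper subset of it; a point `y ∈ C` outside it
has a different `s`-component, also below `C`. At `t = 0` nothing lies strictly below `(t, C)`.
-/

open Relation

def vrComponent (X : Set Z) (s : ℝ) (x : Z) : Set Z :=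
  {y | ReflTransGen (drStep X 0 s) x y}

section

variable {X : Set Z} {s t : ℝ} {x y : Z}

@[simp]
lemma mem_drVertex_zero : x ∈ drVertex X 0 s ↔ x ∈ X := by
  simp [drVertex]

lemma mem_of_reflTransGen_drStep {k : ℕ} (hx : x ∈ X) (h : ReflTransGen (drStep X k s) x y) :
    y ∈ X := by
  induction h with
  | refl => exact hx
  | tail _ hstep _ => exact hstep.2.1.1

lemma mem_vrComponent_self : x ∈ vrComponent X s x :=
  ReflTransGen.refl

lemma drComp_vrComponent (hx : x ∈ X) : drComp X 0 s (vrComponent X s x) :=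
  ⟨x, mem_drVertex_zero.mpr hx, rfl⟩

lemma drStep_zero_mono (hst : s ≤ t) (hxy : drStep X 0 s x y) : drStep X 0 t x y :=
  ⟨mem_drVertex_zero.mpr (mem_drVertex_zero.mp hxy.1),
    mem_drVertex_zero.mpr (mem_drVertex_zero.mp hxy.2.1), hxy.2.2.trans hst⟩

lemma vrComponent_subset_of_mem (hst : s ≤ t) (hy : y ∈ vrComponent X t x) :
    vrComponent X s y ⊆ vrComponent X t x :=
  fun _ hz => hy.trans (ReflTransGen.mono (fun _ _ => drStep_zero_mono hst) _ _ hz)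

lemma vrComponent_ne_of_notMem (hy : y ∉ vrComponent X s x) :
    vrComponent X s x ≠ vrComponent X s y :=
  fun h => hy (h ▸ mem_vrComponent_self)

lemma IsLayer.exists_two_components_below {C : Set Z} (h : IsLayer X 0 t C) (hs : 0 ≤ s)
    (hst : s < t) :
    ∃ D₁ D₂, drComp X 0 s D₁ ∧ drComp X 0 s D₂ ∧ D₁ ≠ D₂ ∧ D₁ ⊆ C ∧ D₂ ⊆ C := by
  obtain ⟨-, ⟨x, hxV, rfl⟩, hlayer⟩ := h
  have hx : x ∈ X := mem_drVertex_zero.mp hxV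
  have hxC : vrComponent X s x ⊆ vrComponent X t x :=
    vrComponent_subset_of_mem hst.le mem_vrComponent_self
  obtain ⟨y, hyC, hyx⟩ :=
    Set.exists_of_ssubset (hlayer s _ hs (drComp_vrComponent hx) hst hxC)
  exact ⟨_, _, drComp_vrComponent hx, drComp_vrComponent (mem_of_reflTransGen_drStep hx hyC),
    vrComponent_ne_of_notMem hyx, hxC, vrComponent_subset_of_mem hst.le hyC⟩

end

theorem layer_point_is_branch_point_VR_general (X : Set Z)
    (t : ℝ) (C : Set Z) (h : IsLayer X 0 t C) : IsBranch X 0 t C := by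
  refine ⟨h.1, h.2.1, ?_⟩
  rcases h.1.eq_or_lt with rfl | ht
  · exact Or.inl fun _ _ hs _ hst _ => hst.not_ge hs
  · exact Or.inr ⟨0, ht, fun s hs hst => h.exists_two_components_below hs hst⟩

/-- every layer point of the Vietoris–Rips hierarchy `Γ₀(X)`
(the case `k = 0`) is a branch point, so for `k = 0` branch points and layer
points coincide. -/
theorem layer_point_is_branch_point_VR (X : Set Z) (hXfin : X.Finite)
    (t : ℝ) (C : Set Z) (h : IsLayer X 0 t C) : IsBranch X 0 t C :=
  layer_point_is_branch_point_VR_general X t C h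
end

section
/- For every element (s,C) of Γ_k(X), the maximal layer point below (s,C) is the minimal element of Γ_k(X) below (s,C) whose component equals C: writing max(s,C) = (t,D), one has D = C as subsets of X, and whenever (u,E) ≤ (s,C) with E = C as subsets of X, then (t,D) ≤ (u,E). -/
variable {Z : Type*} [MetricSpace Z]

/-- the maximal layer point `(t, D)` below `(s, C)` satisfies
`D = C` and is the minimal element of `Γ_k(X)` below `(s, C)` whose component
equals `C`. -/
theorem max_layer_point_is_minimal_with_same_component (X : Set Z) (hXfin : X.Finite)
    (k : ℕ) (s : ℝ) (C : Set Z) (hs : 0 ≤ s) (hC : drComp X k s C)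
    (t : ℝ) (D : Set Z) (hmax : IsMaxLayerBelow X k s C t D) :
    D = C ∧
      ∀ u E, 0 ≤ u → drComp X k u E → u ≤ s → E ⊆ C → E = C →
        t ≤ u ∧ D ⊆ E := by
  obtain ⟨hLay, hts, hDC, hmin⟩ := hmax
  set S : Set ℝ := {u | 0 ≤ u ∧ u ≤ s ∧ drComp X k u C} with hSdef
  have hsS : s ∈ S := ⟨hs, le_refl s, hC⟩
  have hbdd : BddBelow S := ⟨0, fun u hu => hu.1⟩
  set t₀ := sInf S with ht₀def
  have ht₀0 : 0 ≤ t₀ := le_csInf ⟨s, hsS⟩ (fun u hu => hu.1)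
  have ht₀s : t₀ ≤ s := csInf_le hbdd hsS
  -- the finite set of distances
  set F : Set ℝ := (fun p : Z × Z => dist p.1 p.2) '' (X ×ˢ X) with hFdef
  have hFfin : F.Finite := (hXfin.prod hXfin).image _
  -- find m > t₀ bounding from below all elements of F greater than t₀
  obtain ⟨m, hm1, hm2⟩ : ∃ m, t₀ < m ∧ ∀ d ∈ F, t₀ < d → m ≤ d := by
    by_cases hne : (F ∩ Set.Ioi t₀).Nonempty
    · obtain ⟨m, hmF, hmmin⟩ := Set.exists_min_image (F ∩ Set.Ioi t₀) id
        (hFfin.inter_of_left _) hne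
      exact ⟨m, hmF.2, fun d hd hd' => hmmin d ⟨hd, hd'⟩⟩
    · exact ⟨t₀ + 1, by linarith, fun d hd hd' =>
        absurd ⟨d, hd, hd'⟩ hne⟩
  obtain ⟨u, huS, hum⟩ : ∃ u ∈ S, u < m := exists_lt_of_csInf_lt ⟨s, hsS⟩ hm1
  have ht₀u : t₀ ≤ u := csInf_le hbdd huS
  have hdist : ∀ x ∈ X, ∀ y ∈ X, (dist x y ≤ u ↔ dist x y ≤ t₀) := by
    intro x hx y hy
    constructor
    · intro h
      by_contra h'
      have hdF : dist x y ∈ F := ⟨(x, y), ⟨hx, hy⟩, rfl⟩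
      have := hm2 _ hdF (not_le.mp h')
      linarith
    · intro h; linarith
  -- transfer the component structure from u to t₀
  have hVeq : drVertex X k u = drVertex X k t₀ := by
    ext x
    unfold drVertex
    simp only [Set.mem_setOf_eq]
    refine and_congr_right fun hx => ?_
    have : {y | y ∈ X ∧ y ≠ x ∧ dist x y ≤ u} = {y | y ∈ X ∧ y ≠ x ∧ dist x y ≤ t₀} := by
      ext y
      simp only [Set.mem_setOf_eq]
      exact and_congr_right fun hy => and_congr_right fun _ => hdist x hx y hy
    rw [this]
  have hSteq : drStep X k u = drStep X k t₀ := by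
    funext x y
    apply propext
    unfold drStep
    rw [hVeq]
    constructor <;> rintro ⟨h1, h2, h3⟩
    · exact ⟨h1, h2, (hdist x h1.1 y h2.1).mp h3⟩
    · exact ⟨h1, h2, (hdist x h1.1 y h2.1).mpr h3⟩
  have ht₀C : drComp X k t₀ C := by
    obtain ⟨x, hxV, hCeq⟩ := huS.2.2
    exact ⟨x, hVeq ▸ hxV, by rw [← hSteq]; exact hCeq⟩
  -- (t₀, C) is a layer point
  have hLay0 : IsLayer X k t₀ C := by
    refine ⟨ht₀0, ht₀C, fun v E hv hE hvt hEC => ?_⟩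
    refine ⟨hEC, fun hCE => ?_⟩
    have hECeq : E = C := Set.Subset.antisymm hEC hCE
    have : v ∈ S := ⟨hv, le_trans hvt.le ht₀s, hECeq ▸ hE⟩
    exact absurd (csInf_le hbdd this) (not_le.mpr hvt)
  obtain ⟨ht₀t, hCD⟩ := hmin t₀ C hLay0 ht₀s (subset_refl C)
  have hDCeq : D = C := Set.Subset.antisymm hDC hCD
  refine ⟨hDCeq, fun u E hu hE hus hEC hECeq => ?_⟩
  subst hECeq
  subst hDCeq
  constructor
  · by_contra h
    exact (hLay.2.2 u D hu hE (not_le.mp h) (subset_refl D)).2 (subset_refl D)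
  · exact subset_refl D
end

section
/- Suppose θ : Y → X is a stability map. Then for every layer point (s,C) of Γ_k(X) one has θ_*(i_*(s,C)) ≤ σ_*(s,C) in Γ_k(X). -/
variable {Z : Type*} [MetricSpace Z]

/-!
Since `Y` is finite, the component `D = i(C)` is itself a layer point at the least scale at which
it appears, so `i_*(s, C)` has component exactly `D ⊇ C`. For a vertex `x₀ ∈ C`, condition (b)
puts `θ x₀` in `C'`, and `θ x₀` also lies in `E`, the component of `θ(C₁)` at scale
`s₁ + 2r ≤ s + 2r`; hence `E ⊆ C'`. So `(s₁ + 2r, E) ≤ (s + 2r, C')`, and `max` is monotone.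
-/

section DegreeRips

variable {W : Set Z} {k : ℕ}

-- `Set.ncard` of an infinite set is `0`, so monotonicity in the scale needs `W` finite.
lemma drVertex_mono_s7 (hW : W.Finite) {a b : ℝ} (hab : a ≤ b) :
    drVertex W k a ⊆ drVertex W k b := by
  rintro x ⟨hxW, hk⟩
  refine ⟨hxW, hk.trans (Set.ncard_le_ncard ?_ (hW.subset fun y hy => hy.1))⟩
  exact fun y ⟨hyW, hyx, hxy⟩ => ⟨hyW, hyx, hxy.trans hab⟩

lemma drStep_mono_s7 (hW : W.Finite) {a b : ℝ} (hab : a ≤ b) :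
    drStep W k a ≤ drStep W k b :=
  fun _ _ ⟨hx, hy, hxy⟩ => ⟨drVertex_mono_s7 hW hab hx, drVertex_mono_s7 hW hab hy, hxy.trans hab⟩

instance drStep_symm (s : ℝ) : Std.Symm (drStep W k s) :=
  ⟨fun x y ⟨hx, hy, hxy⟩ => ⟨hy, hx, dist_comm x y ▸ hxy⟩⟩

lemma drComp.exists_mem_drVertex {s : ℝ} {C : Set Z} (hC : drComp W k s C) :
    ∃ x ∈ drVertex W k s, x ∈ C := by
  obtain ⟨x, hx, rfl⟩ := hC
  exact ⟨x, hx, Relation.ReflTransGen.refl⟩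

lemma drComp.eq_setOf_of_mem {s : ℝ} {C : Set Z} (hC : drComp W k s C) {z : Z} (hz : z ∈ C) :
    C = {y | Relation.ReflTransGen (drStep W k s) z y} := by
  obtain ⟨x, -, rfl⟩ := hC
  ext y
  exact ⟨fun hy => (Std.Symm.symm _ _ hz).trans hy, fun hy => Relation.ReflTransGen.trans hz hy⟩

lemma drComp.subset_of_le (hW : W.Finite) {a b : ℝ} {E C : Set Z}
    (hE : drComp W k a E) (hC : drComp W k b C) (hab : a ≤ b)
    {z : Z} (hzE : z ∈ E) (hzC : z ∈ C) : E ⊆ C := by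
  rw [hE.eq_setOf_of_mem hzE, hC.eq_setOf_of_mem hzC]
  exact fun y hy => Relation.ReflTransGen.mono (drStep_mono_s7 hW hab) _ _ hy

/-- The scales at which the degree-Rips filtration of `W` can change. -/
def drScales (W : Set Z) : Set ℝ :=
  insert 0 ((fun p : Z × Z => dist p.1 p.2) '' (W ×ˢ W))

lemma drScales_finite (hW : W.Finite) : (drScales W).Finite :=
  ((hW.prod hW).image _).insert 0

lemma nonneg_of_mem_drScales {a : ℝ} (ha : a ∈ drScales W) : 0 ≤ a := by
  rcases ha with rfl | ⟨p, -, rfl⟩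
  exacts [le_rfl, dist_nonneg]

lemma exists_drScales_le_forall_dist_le_iff (hW : W.Finite) {t : ℝ} (ht : 0 ≤ t) :
    ∃ a ∈ drScales W, a ≤ t ∧ ∀ x ∈ W, ∀ y ∈ W, dist x y ≤ a ↔ dist x y ≤ t := by
  obtain ⟨a, ⟨haS, hat⟩, hmax⟩ := Set.exists_max_image {a ∈ drScales W | a ≤ t} id
    ((drScales_finite hW).subset fun _ h => h.1) ⟨0, Set.mem_insert 0 _, ht⟩
  refine ⟨a, haS, hat, fun x hx y hy => ⟨fun h => h.trans hat, fun h => ?_⟩⟩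
  exact hmax (dist x y) ⟨Set.mem_insert_of_mem 0 ⟨(x, y), ⟨hx, hy⟩, rfl⟩, h⟩

lemma drComp_congr_scale {a b : ℝ} (hab : ∀ x ∈ W, ∀ y ∈ W, dist x y ≤ a ↔ dist x y ≤ b) :
    drComp W k a = drComp W k b := by
  have hV : drVertex W k a = drVertex W k b := by
    ext x
    refine and_congr_right fun hx => ?_
    congr! 4 with y
    exact and_congr_right fun hy => and_congr_right fun _ => hab x hx y hy
  have hS : drStep W k a = drStep W k b := by
    ext x y
    simp only [drStep, hV]
    exact and_congr_right fun hx => and_congr_right fun hy => hab x hx.1 y hy.1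
  funext C
  simp only [drComp, hV, hS]

lemma exists_isLayer_le (hW : W.Finite) {s : ℝ} {D : Set Z} (hs : 0 ≤ s)
    (hD : drComp W k s D) : ∃ t ≤ s, IsLayer W k t D := by
  have snap : ∀ {t}, 0 ≤ t → drComp W k t D → ∃ a ∈ drScales W, a ≤ t ∧ drComp W k a D := by
    intro t ht hDt
    obtain ⟨a, haS, hat, hdist⟩ := exists_drScales_le_forall_dist_le_iff hW ht
    exact ⟨a, haS, hat, drComp_congr_scale hdist ▸ hDt⟩
  obtain ⟨a, haS, has, hDa⟩ := snap hs hD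
  obtain ⟨t, ⟨htS, hts, hDt⟩, hmin⟩ := Set.exists_min_image
    {a ∈ drScales W | a ≤ s ∧ drComp W k a D} id
    ((drScales_finite hW).subset fun _ h => h.1) ⟨a, haS, has, hDa⟩
  refine ⟨t, hts, nonneg_of_mem_drScales htS, hDt, fun s' D' hs' hD' hs't hD'D => ?_⟩
  refine hD'D.ssubset_of_ne fun hD'eq => ?_
  obtain ⟨b, hbS, hbs', hDb⟩ := snap hs' (hD'eq ▸ hD')
  exact (hbs'.trans_lt hs't).not_ge (hmin b ⟨hbS, hbs'.trans (hs't.le.trans hts), hDb⟩)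

lemma IsMaxLayerBelow.eq_of_drComp (hW : W.Finite) {s t : ℝ} {D C : Set Z}
    (hD : drComp W k s D) (h : IsMaxLayerBelow W k s D t C) : C = D := by
  obtain ⟨⟨ht, -, -⟩, hts, hCD, hmax⟩ := h
  obtain ⟨t₀, ht₀s, hlayer⟩ := exists_isLayer_le hW (ht.trans hts) hD
  exact hCD.antisymm (hmax t₀ D hlayer ht₀s subset_rfl).2

lemma IsMaxLayerBelow.le_of_le {u u' t t' : ℝ} {C C' D D' : Set Z}
    (h : IsMaxLayerBelow W k u C t D) (h' : IsMaxLayerBelow W k u' C' t' D')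
    (hu : u ≤ u') (hC : C ⊆ C') : t ≤ t' ∧ D ⊆ D' :=
  h'.2.2.2 t D h.1 (h.2.1.trans hu) (h.2.2.1.trans hC)

end DegreeRips

lemma IsStabilityMap.apply_mem_drComp {X Y : Set Z} {k : ℕ} {r : ℝ} {θ : Z → Z}
    (hX : X.Finite) (hθ : IsStabilityMap X Y k r θ) {s : ℝ} (hs : 0 ≤ s) {x : Z}
    (hx : x ∈ drVertex X k s) {C : Set Z} (hC : drComp X k (s + 2 * r) C) (hxC : x ∈ C) :
    θ x ∈ C := by
  obtain ⟨G, hG, hxG, hθxG⟩ := ((hθ.2 s hs).2.1) x hx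
  exact hG.subset_of_le hX hC le_rfl hxG hxC hθxG

theorem theta_star_i_star_le_sigma_star_general (X Y : Set Z)
    (hXfin : X.Finite) (hYfin : Y.Finite)
    (k : ℕ) (r : ℝ) (θ : Z → Z) (hθ : IsStabilityMap X Y k r θ)
    (s : ℝ) (C : Set Z) (hC : IsLayer X k s C)
    (D : Set Z) (hD : drComp Y k s D) (hCD : C ⊆ D)
    (s₁ : ℝ) (C₁ : Set Z) (h₁ : IsMaxLayerBelow Y k s D s₁ C₁)
    (E : Set Z) (hE : drComp X k (s₁ + 2 * r) E) (hθC₁ : θ '' C₁ ⊆ E)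
    (s₂ : ℝ) (C₂ : Set Z) (h₂ : IsMaxLayerBelow X k (s₁ + 2 * r) E s₂ C₂)
    (C' : Set Z) (hC' : drComp X k (s + 2 * r) C') (hCC' : C ⊆ C')
    (v : ℝ) (F : Set Z) (h₃ : IsMaxLayerBelow X k (s + 2 * r) C' v F) :
    s₂ ≤ v ∧ C₂ ⊆ F := by
  obtain ⟨x₀, hx₀V, hx₀C⟩ := hC.2.1.exists_mem_drVertex
  have hC₁ : C₁ = D := h₁.eq_of_drComp hYfin hD
  have hθx₀E : θ x₀ ∈ E := hθC₁ ⟨x₀, hC₁ ▸ hCD hx₀C, rfl⟩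
  have hθx₀C' : θ x₀ ∈ C' := hθ.apply_mem_drComp hXfin hC.1 hx₀V hC' (hCC' hx₀C)
  have hscale : s₁ + 2 * r ≤ s + 2 * r := by linarith [h₁.2.1]
  have hEC' : E ⊆ C' := hE.subset_of_le hXfin hC' hscale hθx₀E hθx₀C'
  exact h₂.le_of_le h₃ hscale hEC'

/-- for a stability map `θ : Y → X` and every layer point `(s, C)`
of `Γ_k(X)`, one has `θ_* (i_* (s, C)) ≤ σ_* (s, C)` in `Γ_k(X)`.
Here `i(C) = D` is the component of `Γ_k(Y)` at scale `s` containing `C`,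
`i_*(s, C) = (s₁, C₁)` is the maximal layer point of `Γ_k(Y)` below `(s, D)`,
`θ_*(s₁, C₁) = (s₂, C₂)` is the maximal layer point of `Γ_k(X)` below
`(s₁ + 2r, E)` where `E` is the component containing `θ(C₁)`, and
`σ_*(s, C) = (v, F)` is the maximal layer point of `Γ_k(X)` below
`(s + 2r, C')` where `C'` is the component at scale `s + 2r` containing `C`. -/
theorem theta_star_i_star_le_sigma_star (X Y : Set Z)
    (hXfin : X.Finite) (hYfin : Y.Finite) (hXY : X ⊆ Y)
    (k : ℕ) (r : ℝ) (hr : 0 < r) (θ : Z → Z) (hθ : IsStabilityMap X Y k r θ)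
    (s : ℝ) (C : Set Z) (hC : IsLayer X k s C)
    (D : Set Z) (hD : drComp Y k s D) (hCD : C ⊆ D)
    (s₁ : ℝ) (C₁ : Set Z) (h₁ : IsMaxLayerBelow Y k s D s₁ C₁)
    (E : Set Z) (hE : drComp X k (s₁ + 2 * r) E) (hθC₁ : θ '' C₁ ⊆ E)
    (s₂ : ℝ) (C₂ : Set Z) (h₂ : IsMaxLayerBelow X k (s₁ + 2 * r) E s₂ C₂)
    (C' : Set Z) (hC' : drComp X k (s + 2 * r) C') (hCC' : C ⊆ C')
    (v : ℝ) (F : Set Z) (h₃ : IsMaxLayerBelow X k (s + 2 * r) C' v F) :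
    s₂ ≤ v ∧ C₂ ⊆ F :=
  theta_star_i_star_le_sigma_star_general X Y hXfin hYfin k r θ hθ s C hC D hD hCD s₁ C₁ h₁ E hE
    hθC₁ s₂ C₂ h₂ C' hC' hCC' v F h₃
end

section
/- Suppose θ : Y → X is a stability map. Then for every layer point (s,D) of Γ_k(Y) one has i_*(θ_*(s,D)) ≤ σ_*(s,D) in Γ_k(Y). -/
variable {Z : Type*} [MetricSpace Z]

/-!
Everything happens inside the component `D'` of `Y` at scale `s + 2r` containing `D`. By
property (c) of a stability map, `θ` moves a vertex of `D` only within `D'`; hence the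
`X`-component `E₁'` of `θ(D)` meets `D'` and lies in it, and then so does the `Y`-component `E₂'`
of `E₁` at the smaller scale `t₁ ≤ s + 2r`. So `(t₂, E₂)` is a layer point below `(s + 2r, D')`,
and maximality of `σ_*(s, D)` concludes.
-/

section

variable {X Y W : Set Z} {k : ℕ} {s t : ℝ}

lemma drVertex_mono_s8 (hY : Y.Finite) (hXY : X ⊆ Y) (hst : s ≤ t) :
    drVertex X k s ⊆ drVertex Y k t := fun _ hx =>
  ⟨hXY hx.1, hx.2.trans <| Set.ncard_le_ncard
    (fun _ hy => ⟨hXY hy.1, hy.2.1, hy.2.2.trans hst⟩) (hY.subset fun _ hy => hy.1)⟩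

lemma drStep_mono_s8 (hY : Y.Finite) (hXY : X ⊆ Y) (hst : s ≤ t) :
    drStep X k s ≤ drStep Y k t := fun _ _ h =>
  ⟨drVertex_mono_s8 hY hXY hst h.1, drVertex_mono_s8 hY hXY hst h.2.1, h.2.2.trans hst⟩

instance : Std.Symm (drStep W k s) :=
  ⟨fun x y h => ⟨h.2.1, h.1, dist_comm x y ▸ h.2.2⟩⟩

lemma drComp.exists_vertex_mem {C : Set Z} (hC : drComp W k s C) :
    ∃ x ∈ drVertex W k s, x ∈ C := by
  obtain ⟨x, hx, rfl⟩ := hC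
  exact ⟨x, hx, Relation.ReflTransGen.refl⟩

lemma drComp.subset_of_mem (hY : Y.Finite) (hXY : X ⊆ Y) (hst : s ≤ t) {C C' : Set Z}
    (hC : drComp X k s C) (hC' : drComp Y k t C') {z : Z} (hz : z ∈ C) (hz' : z ∈ C') :
    C ⊆ C' := by
  obtain ⟨x, -, rfl⟩ := hC
  obtain ⟨x', -, rfl⟩ := hC'
  intro w hw
  exact hz'.trans <| Relation.ReflTransGen.mono (drStep_mono_s8 hY hXY hst) _ _
    ((Std.Symm.symm _ _ hz).trans hw)

end

/-- Here `θ_*(s, D) = (t₁, E₁)` is the maximal layer point of `Γ_k(X)` below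
`(s + 2r, E₁')` where `E₁'` is the component containing `θ(D)`,
`i_*(t₁, E₁) = (t₂, E₂)` is the maximal layer point of `Γ_k(Y)` below
`(t₁, E₂')` where `E₂' = i(E₁)` is the component of `Y` at scale `t₁`
containing `E₁`, and `σ_*(s, D) = (v, F)` is the maximal layer point of
`Γ_k(Y)` below `(s + 2r, D')` where `D'` is the component at scale `s + 2r`
containing `D`. -/
theorem i_star_theta_star_le_sigma_star_general (X Y : Set Z)
    (hYfin : Y.Finite) (hXY : X ⊆ Y)
    (k : ℕ) (r : ℝ) (θ : Z → Z) (hθ : IsStabilityMap X Y k r θ)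
    (s : ℝ) (D : Set Z) (hD : IsLayer Y k s D)
    (E₁' : Set Z) (hE₁' : drComp X k (s + 2 * r) E₁') (hθD : θ '' D ⊆ E₁')
    (t₁ : ℝ) (E₁ : Set Z) (h₁ : IsMaxLayerBelow X k (s + 2 * r) E₁' t₁ E₁)
    (E₂' : Set Z) (hE₂' : drComp Y k t₁ E₂') (hE₁E₂' : E₁ ⊆ E₂')
    (t₂ : ℝ) (E₂ : Set Z) (h₂ : IsMaxLayerBelow Y k t₁ E₂' t₂ E₂)
    (D' : Set Z) (hD' : drComp Y k (s + 2 * r) D') (hDD' : D ⊆ D')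
    (v : ℝ) (F : Set Z) (h₃ : IsMaxLayerBelow Y k (s + 2 * r) D' v F) :
    t₂ ≤ v ∧ E₂ ⊆ F := by
  obtain ⟨y, hy, hyD⟩ := hD.2.1.exists_vertex_mem
  obtain ⟨Dy, hDy, hyDy, hθyDy⟩ := (hθ.2 s hD.1).2.2 y hy
  have hθyD' : θ y ∈ D' := hDy.subset_of_mem hYfin subset_rfl le_rfl hD' hyDy (hDD' hyD) hθyDy
  have hE₁'D' : E₁' ⊆ D' :=
    hE₁'.subset_of_mem hYfin hXY le_rfl hD' (hθD ⟨y, hyD, rfl⟩) hθyD'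
  obtain ⟨x, -, hxE₁⟩ := h₁.1.2.1.exists_vertex_mem
  have hE₂'D' : E₂' ⊆ D' :=
    hE₂'.subset_of_mem hYfin subset_rfl h₁.2.1 hD' (hE₁E₂' hxE₁) (hE₁'D' (h₁.2.2.1 hxE₁))
  exact h₃.2.2.2 t₂ E₂ h₂.1 (h₂.2.1.trans h₁.2.1) (h₂.2.2.1.trans hE₂'D')

/-- for a stability map `θ : Y → X` and every layer point `(s, D)`
of `Γ_k(Y)`, one has `i_* (θ_* (s, D)) ≤ σ_* (s, D)` in `Γ_k(Y)`.
Here `θ_*(s, D) = (t₁, E₁)` is the maximal layer point of `Γ_k(X)` below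
`(s + 2r, E₁')` where `E₁'` is the component containing `θ(D)`,
`i_*(t₁, E₁) = (t₂, E₂)` is the maximal layer point of `Γ_k(Y)` below
`(t₁, E₂')` where `E₂' = i(E₁)` is the component of `Y` at scale `t₁`
containing `E₁`, and `σ_*(s, D) = (v, F)` is the maximal layer point of
`Γ_k(Y)` below `(s + 2r, D')` where `D'` is the component at scale `s + 2r`
containing `D`. -/
theorem i_star_theta_star_le_sigma_star (X Y : Set Z)
    (hXfin : X.Finite) (hYfin : Y.Finite) (hXY : X ⊆ Y)
    (k : ℕ) (r : ℝ) (hr : 0 < r) (θ : Z → Z) (hθ : IsStabilityMap X Y k r θ)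
    (s : ℝ) (D : Set Z) (hD : IsLayer Y k s D)
    (E₁' : Set Z) (hE₁' : drComp X k (s + 2 * r) E₁') (hθD : θ '' D ⊆ E₁')
    (t₁ : ℝ) (E₁ : Set Z) (h₁ : IsMaxLayerBelow X k (s + 2 * r) E₁' t₁ E₁)
    (E₂' : Set Z) (hE₂' : drComp Y k t₁ E₂') (hE₁E₂' : E₁ ⊆ E₂')
    (t₂ : ℝ) (E₂ : Set Z) (h₂ : IsMaxLayerBelow Y k t₁ E₂' t₂ E₂)
    (D' : Set Z) (hD' : drComp Y k (s + 2 * r) D') (hDD' : D ⊆ D')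
    (v : ℝ) (F : Set Z) (h₃ : IsMaxLayerBelow Y k (s + 2 * r) D' v F) :
    t₂ ≤ v ∧ E₂ ⊆ F :=
  i_star_theta_star_le_sigma_star_general X Y hYfin hXY k r θ hθ s D hD E₁' hE₁' hθD t₁ E₁ h₁ E₂'
    hE₂' hE₁E₂' t₂ E₂ h₂ D' hD' hDD' v F h₃
end
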